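/- For any subset A of indices with p_A > 0, the conditional mean f̂_A^{m-1} = (Σ_{i∈A} p_i f̂_i^{m-1})/p_A satisfies ∂f̂_A^{m-1}/∂t = (⟨f̂^{2m-2}⟩_A - (⟨f̂^{m-1}⟩_A)² + (u-1)⟨f̂^{2m-2}⟩_A)/t², where ⟨·⟩_A denotes the p-conditional expectation over A. -/

import Mathlib

/-!
Write `g_i(s) = 1 + ((u-1)/s) f_i^{m-1}`, `N_i = g_i^{1/(1-u)}` and `f̂_i = f_i^{m-1}/g_i`. Since
`g_i' = -(u-1) f_i^{m-1}/s²`, the chain rule gives the two Riccati-type relations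
`N_i' = N_i f̂_i / s²` and `f̂_i' = (u-1) f̂_i² / s²`. The normalisation `Z` cancels from the
conditional mean, which is therefore the weighted mean `Σ_A N_i f̂_i / Σ_A N_i`, and the quotient
rule applied to these two relations produces the variance-like expression of the statement.
-/

open Filter Topology

theorem Finset.sum_div_mul_div_sum_div {ι K : Type*} [Semifield K] (A : Finset ι) (w x : ι → K)
    {Z : K} (hZ : Z ≠ 0) :
    (∑ i ∈ A, w i / Z * x i) / ∑ i ∈ A, w i / Z = (∑ i ∈ A, w i * x i) / ∑ i ∈ A, w i := by
  simp_rw [div_mul_eq_mul_div, ← Finset.sum_div]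
  exact div_div_div_cancel_right₀ hZ _ _

theorem hasDerivAt_weightedMean {ι : Type*} {A : Finset ι} {w x : ι → ℝ → ℝ} {a t : ℝ}
    (hw : ∀ i ∈ A, HasDerivAt (w i) (w i t * x i t / t ^ 2) t)
    (hx : ∀ i ∈ A, HasDerivAt (x i) (a * x i t ^ 2 / t ^ 2) t)
    (hS : ∑ i ∈ A, w i t ≠ 0) :
    HasDerivAt (fun s => (∑ i ∈ A, w i s * x i s) / ∑ i ∈ A, w i s)
      (((∑ i ∈ A, w i t * x i t ^ 2) / ∑ i ∈ A, w i t
          - ((∑ i ∈ A, w i t * x i t) / ∑ i ∈ A, w i t) ^ 2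
          + a * ((∑ i ∈ A, w i t * x i t ^ 2) / ∑ i ∈ A, w i t)) / t ^ 2) t := by
  have hnum := HasDerivAt.fun_sum fun i hi => (hw i hi).mul (hx i hi)
  have hden := HasDerivAt.fun_sum hw
  refine (hnum.div hden hS).congr_deriv ?_
  have hnum' : ∑ i ∈ A, (w i t * x i t / t ^ 2 * x i t + w i t * (a * x i t ^ 2 / t ^ 2))
      = (1 + a) * (∑ i ∈ A, w i t * x i t ^ 2) / t ^ 2 := by
    rw [Finset.mul_sum, Finset.sum_div]
    exact Finset.sum_congr rfl fun i _ => by ring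
  rw [hnum', ← Finset.sum_div]
  simp only [Pi.mul_apply]
  field_simp
  ring

section EscortDerivatives

variable {a c t : ℝ}

theorem hasDerivAt_one_add_div_mul (ht : t ≠ 0) :
    HasDerivAt (fun s => 1 + (a / s) * c) (-(a * c) / t ^ 2) t := by
  have h := (((hasDerivAt_inv ht).const_mul a).mul_const c).const_add 1
  simp only [← div_eq_mul_inv] at h
  exact h.congr_deriv (by ring)

theorem hasDerivAt_div_one_add_div_mul (ht : t ≠ 0) (hg : 1 + (a / t) * c ≠ 0) :
    HasDerivAt (fun s => c / (1 + (a / s) * c)) (a * (c / (1 + (a / t) * c)) ^ 2 / t ^ 2) t := by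
  have h := (hasDerivAt_const t c).div (hasDerivAt_one_add_div_mul ht) hg
  exact h.congr_deriv (by rw [div_pow]; ring)

theorem hasDerivAt_one_add_div_mul_rpow {u : ℝ} (hu : u ≠ 1) (ht : t ≠ 0)
    (hg : 1 + ((u - 1) / t) * c ≠ 0) :
    HasDerivAt (fun s => (1 + ((u - 1) / s) * c) ^ (1 / (1 - u)))
      ((1 + ((u - 1) / t) * c) ^ (1 / (1 - u)) * (c / (1 + ((u - 1) / t) * c)) / t ^ 2) t := by
  have h := (hasDerivAt_one_add_div_mul ht).rpow_const (p := 1 / (1 - u)) (Or.inl hg)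
  rw [Real.rpow_sub_one hg] at h
  have h1u : 1 - u ≠ 0 := sub_ne_zero.mpr hu.symm
  exact h.congr_deriv (by field_simp; ring)

end EscortDerivatives

theorem deriv_conditional_mean_fhat_general {W : ℕ} (u t m : ℝ) (hu : u ≠ 1) (ht : 0 < t)
    (f : Fin W → ℝ)
    (hpos : ∀ j, 0 < 1 + ((u - 1) / t) * f j ^ (m - 1))
    (A : Finset (Fin W)) :
    let N : Fin W → ℝ → ℝ :=
      fun j s => (1 + ((u - 1) / s) * f j ^ (m - 1)) ^ (1 / (1 - u))
    let Z : ℝ → ℝ := fun s => ∑ j, N j s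
    let p : Fin W → ℝ := fun j => N j t / Z t
    let fhat : Fin W → ℝ := fun j => f j ^ (m - 1) / (1 + ((u - 1) / t) * f j ^ (m - 1))
    let pA : ℝ := ∑ i ∈ A, p i
    0 < pA →
    HasDerivAt
      (fun s : ℝ => (∑ i ∈ A, (N i s / Z s) *
          (f i ^ (m - 1) / (1 + ((u - 1) / s) * f i ^ (m - 1)))) /
        (∑ i ∈ A, N i s / Z s))
      ((((∑ i ∈ A, p i * fhat i ^ 2) / pA) - ((∑ i ∈ A, p i * fhat i) / pA) ^ 2 +
          (u - 1) * ((∑ i ∈ A, p i * fhat i ^ 2) / pA)) / t ^ 2) t := by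
  intro N Z p fhat pA hpA
  obtain ⟨i₀, hi₀⟩ : A.Nonempty := Finset.nonempty_of_sum_ne_zero hpA.ne'
  have hN : ∀ j, HasDerivAt (N j) (N j t * fhat j / t ^ 2) t := fun j =>
    hasDerivAt_one_add_div_mul_rpow hu ht.ne' (hpos j).ne'
  have hNpos : ∀ j, 0 < N j t := fun j => Real.rpow_pos_of_pos (hpos j) _
  have hZt : Z t ≠ 0 := (Finset.sum_pos (fun j _ => hNpos j) ⟨i₀, Finset.mem_univ i₀⟩).ne'
  have hZ : ∀ᶠ s in 𝓝 t, Z s ≠ 0 :=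
    (HasDerivAt.fun_sum fun j _ => hN j).continuousAt.eventually_ne hZt
  have hmean := hasDerivAt_weightedMean (A := A) (fun j _ => hN j)
    (fun j _ => hasDerivAt_div_one_add_div_mul ht.ne' (hpos j).ne')
    (Finset.sum_pos (fun j _ => hNpos j) ⟨i₀, hi₀⟩).ne'
  refine (hmean.congr_of_eventuallyEq ?_).congr_deriv ?_
  · filter_upwards [hZ] with s hs
    exact Finset.sum_div_mul_div_sum_div A _ _ hs
  · simp only [pA, p, Finset.sum_div_mul_div_sum_div A _ _ hZt]
    rfl

/-- For any subset `A` with `p_A > 0`, the conditional mean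
`f̂_A^{m-1} = (Σ_{i∈A} p_i f̂_i^{m-1})/p_A` satisfies
`∂f̂_A^{m-1}/∂t = (⟨f̂^{2m-2}⟩_A - (⟨f̂^{m-1}⟩_A)² + (u-1)⟨f̂^{2m-2}⟩_A)/t²`. -/
theorem deriv_conditional_mean_fhat {W : ℕ} (u t m : ℝ) (hu : u ≠ 1) (ht : 0 < t)
    (hm : 1 < m) (f : Fin W → ℝ) (hf : ∀ j, 0 ≤ f j)
    (hpos : ∀ j, 0 < 1 + ((u - 1) / t) * f j ^ (m - 1))
    (A : Finset (Fin W)) (hA : A.Nonempty) :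
    let N : Fin W → ℝ → ℝ :=
      fun j s => (1 + ((u - 1) / s) * f j ^ (m - 1)) ^ (1 / (1 - u))
    let Z : ℝ → ℝ := fun s => ∑ j, N j s
    let p : Fin W → ℝ := fun j => N j t / Z t
    let fhat : Fin W → ℝ := fun j => f j ^ (m - 1) / (1 + ((u - 1) / t) * f j ^ (m - 1))
    let pA : ℝ := ∑ i ∈ A, p i
    0 < pA →
    HasDerivAt
      (fun s : ℝ => (∑ i ∈ A, (N i s / Z s) *
          (f i ^ (m - 1) / (1 + ((u - 1) / s) * f i ^ (m - 1)))) /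
        (∑ i ∈ A, N i s / Z s))
      ((((∑ i ∈ A, p i * fhat i ^ 2) / pA) - ((∑ i ∈ A, p i * fhat i) / pA) ^ 2 +
          (u - 1) * ((∑ i ∈ A, p i * fhat i ^ 2) / pA)) / t ^ 2) t :=
  deriv_conditional_mean_fhat_general u t m hu ht f hpos A
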